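/- Let P : [-1,1]² → [0,∞) be bounded, measurable and symmetric (P(w,w_*) = P(w_*,w)), let ε > 0, ξ > 0, and let (f_t^S, f_t^I) solve the pure social kinetic system with f_t = f_t^S + f_t^I a probability measure for all t. Then the variance of f_t satisfies the dissipation identity: ε d/dt Var[f_t] = −ξ ∬ (w − w_*)² P(w,w_*) (1 − ξP(w,w_*)) df_t(w) df_t(w_*) for all t ≥ 0. -/

import Mathlib

/-!
Testing the kinetic equation with `φ(w) = w²` and `φ(w) = w` gives the derivatives of the first two
moments of `f_t` as double integrals over `f_t ⊗ f_t`; combined in `Var' = M₂' - 2 M₁ M₁'`, they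
leave the integral of `(w' - M₁)² - (w - M₁)²`, `w' = w + ξP(w,w₁)(w₁ - w)`. As `P` is symmetric,
this integral equals the one of the average of the integrand and its image under `w ↔ w₁`, where
the first-order terms in `w - M₁` cancel and `-ξ(w - w₁)² P (1 - ξP)` is left.
-/

open MeasureTheory Set Filter

noncomputable section

/-- The measure is supported in `[-1,1]`. -/
def SuppIcc (μ : Measure ℝ) : Prop := μ (Icc (-1 : ℝ) 1)ᶜ = 0

/-- Variance of a (probability) measure on `ℝ`. -/
def var (f : Measure ℝ) : ℝ := (∫ w, w ^ 2 ∂f) - (∫ w, w ∂f) ^ 2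

/-- `(fS, fI)` solves the pure social kinetic system: for every continuous test function `φ`
and every `t ≥ 0`,
`d/dt ∫φ dfH_t = (1/ε)∬[φ(w + ξP(w,w₁)(w₁-w)) - φ(w)] dfH_t(w) df_t(w₁)`, `H ∈ {S,I}`,
where `f_t = fS_t + fI_t`. -/
def SolvesPureSocial (ε ξ : ℝ) (P : ℝ → ℝ → ℝ) (fS fI : ℝ → Measure ℝ) : Prop :=
  ∀ φ : C(ℝ, ℝ), ∀ t ∈ Ici (0 : ℝ),
    HasDerivWithinAt (fun s => ∫ w, φ w ∂(fS s))
      ((1 / ε) * ∫ w, ∫ w₁, (φ (w + ξ * P w w₁ * (w₁ - w)) - φ w) ∂(fS t + fI t) ∂(fS t))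
      (Ici 0) t ∧
    HasDerivWithinAt (fun s => ∫ w, φ w ∂(fI s))
      ((1 / ε) * ∫ w, ∫ w₁, (φ (w + ξ * P w w₁ * (w₁ - w)) - φ w) ∂(fS t + fI t) ∂(fI t))
      (Ici 0) t

lemma SuppIcc.ae_mem_Icc {μ : Measure ℝ} (hμ : SuppIcc μ) : ∀ᵐ w ∂μ, w ∈ Icc (-1 : ℝ) 1 :=
  ae_iff.2 hμ

lemma SuppIcc.add {μ ν : Measure ℝ} (hμ : SuppIcc μ) (hν : SuppIcc ν) : SuppIcc (μ + ν) := by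
  rw [SuppIcc, Measure.add_apply, hμ, hν, add_zero]

lemma SuppIcc.ae_mem_Icc_prod {μ ν : Measure ℝ} (hμ : SuppIcc μ) (hν : SuppIcc ν) :
    ∀ᵐ p ∂μ.prod ν, p ∈ Icc (-1 : ℝ) 1 ×ˢ Icc (-1 : ℝ) 1 :=
  (Measure.quasiMeasurePreserving_fst.ae hμ.ae_mem_Icc).and
    (Measure.quasiMeasurePreserving_snd.ae hν.ae_mem_Icc)

lemma integrable_comp_of_ae_mem_isCompact {α E : Type*} [MeasurableSpace α] {μ : Measure α}
    [IsFiniteMeasure μ] [TopologicalSpace E] [MeasurableSpace E] [OpensMeasurableSpace E]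
    {K : Set E} (hK : IsCompact K) {G : E → ℝ} (hG : Continuous G) {F : α → E}
    (hF : Measurable F) (hFK : ∀ᵐ a ∂μ, F a ∈ K) : Integrable (fun a => G (F a)) μ := by
  obtain ⟨M, hM⟩ := hK.exists_bound_of_continuousOn hG.continuousOn
  exact .of_bound (hG.measurable.comp hF).aestronglyMeasurable M (hFK.mono fun a ha => hM _ ha)

lemma SuppIcc.integrable_of_continuous {μ : Measure ℝ} [IsFiniteMeasure μ] (hμ : SuppIcc μ)
    {φ : ℝ → ℝ} (hφ : Continuous φ) : Integrable φ μ :=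
  integrable_comp_of_ae_mem_isCompact isCompact_Icc hφ measurable_id hμ.ae_mem_Icc

lemma integrable_comp_kernel {P : ℝ → ℝ → ℝ} (hPmeas : Measurable (Function.uncurry P)) {a b : ℝ}
    (hP : ∀ w ∈ Icc (-1 : ℝ) 1, ∀ w₁ ∈ Icc (-1 : ℝ) 1, P w w₁ ∈ Icc a b)
    {μ ν : Measure ℝ} [IsFiniteMeasure μ] [IsFiniteMeasure ν] (hμ : SuppIcc μ) (hν : SuppIcc ν)
    {G : ℝ → ℝ → ℝ → ℝ} (hG : Continuous fun x : ℝ × ℝ × ℝ => G x.1 x.2.1 x.2.2) :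
    Integrable (fun p : ℝ × ℝ => G p.1 p.2 (P p.1 p.2)) (μ.prod ν) :=
  integrable_comp_of_ae_mem_isCompact
    (isCompact_Icc.prod (isCompact_Icc.prod (isCompact_Icc (a := a) (b := b)))) hG
    (measurable_fst.prodMk (measurable_snd.prodMk hPmeas))
    ((hμ.ae_mem_Icc_prod hν).mono fun _ hp => ⟨hp.1, hp.2, hP _ hp.1 _ hp.2⟩)

lemma integral_prod_self_eq_integral_half_add_swap {α : Type*} [MeasurableSpace α]
    {μ : Measure α} [SFinite μ] {g : α × α → ℝ} (hg : Integrable g (μ.prod μ)) :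
    ∫ p, g p ∂μ.prod μ = ∫ p, (g p + g p.swap) / 2 ∂μ.prod μ := by
  have hg_swap : Integrable (fun p => g p.swap) (μ.prod μ) := hg.swap
  rw [integral_div, integral_add hg hg_swap, integral_prod_swap]
  ring

lemma hasDerivWithinAt_var {μ : ℝ → Measure ℝ} {s : Set ℝ} {t a b : ℝ}
    (h₂ : HasDerivWithinAt (fun τ => ∫ w, w ^ 2 ∂μ τ) a s t)
    (h₁ : HasDerivWithinAt (fun τ => ∫ w, w ∂μ τ) b s t) :
    HasDerivWithinAt (fun τ => var (μ τ)) (a - 2 * (∫ w, w ∂μ t) * b) s t := by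
  refine (h₂.sub (h₁.pow 2)).congr_deriv ?_
  push_cast
  ring

lemma SolvesPureSocial.hasDerivWithinAt_integral_add {ε ξ : ℝ} {P : ℝ → ℝ → ℝ}
    {fS fI : ℝ → Measure ℝ} (hsol : SolvesPureSocial ε ξ P fS fI)
    (hreg : ∀ s ∈ Ici (0 : ℝ), IsFiniteMeasure (fS s) ∧ IsFiniteMeasure (fI s) ∧
      SuppIcc (fS s) ∧ SuppIcc (fI s))
    {φ : ℝ → ℝ} (hφ : Continuous φ) {t : ℝ} (ht : t ∈ Ici 0)
    (hjump : Integrable (fun p : ℝ × ℝ => φ (p.1 + ξ * P p.1 p.2 * (p.2 - p.1)) - φ p.1)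
      ((fS t + fI t).prod (fS t + fI t))) :
    HasDerivWithinAt (fun s => ∫ w, φ w ∂(fS s + fI s))
      ((1 / ε) * ∫ p, (φ (p.1 + ξ * P p.1 p.2 * (p.2 - p.1)) - φ p.1)
        ∂(fS t + fI t).prod (fS t + fI t)) (Ici 0) t := by
  have hsplit : ∀ s ∈ Ici (0 : ℝ),
      ∫ w, φ w ∂(fS s + fI s) = (∫ w, φ w ∂fS s) + ∫ w, φ w ∂fI s := fun s hs => by
    obtain ⟨_, _, hS, hI⟩ := hreg s hs
    exact integral_add_measure (hS.integrable_of_continuous hφ) (hI.integrable_of_continuous hφ)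
  obtain ⟨_, _, -, -⟩ := hreg t ht
  have hinner := hjump.integral_prod_left
  obtain ⟨hS, hI⟩ := hsol ⟨φ, hφ⟩ t ht
  refine (hS.add hI).congr hsplit (hsplit t ht) |>.congr_deriv ?_
  rw [← mul_add, integral_prod _ hjump, integral_add_measure
    (hinner.mono_measure (Measure.le_add_right le_rfl))
    (hinner.mono_measure (Measure.le_add_left le_rfl))]
  rfl

lemma integral_sq_jump_sub_two_mul_integral_jump {ξ : ℝ} {P : ℝ → ℝ → ℝ}
    (hPsymm : ∀ w ∈ Icc (-1 : ℝ) 1, ∀ w₁ ∈ Icc (-1 : ℝ) 1, P w w₁ = P w₁ w)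
    {f : Measure ℝ} [SFinite f] (hf : SuppIcc f)
    (h₂ : Integrable (fun p : ℝ × ℝ => (p.1 + ξ * P p.1 p.2 * (p.2 - p.1)) ^ 2 - p.1 ^ 2)
      (f.prod f))
    (h₁ : Integrable (fun p : ℝ × ℝ => p.1 + ξ * P p.1 p.2 * (p.2 - p.1) - p.1) (f.prod f))
    (m : ℝ) :
    (∫ p, ((p.1 + ξ * P p.1 p.2 * (p.2 - p.1)) ^ 2 - p.1 ^ 2) ∂f.prod f)
        - 2 * m * ∫ p, (p.1 + ξ * P p.1 p.2 * (p.2 - p.1) - p.1) ∂f.prod f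
      = -ξ * ∫ p, (p.1 - p.2) ^ 2 * P p.1 p.2 * (1 - ξ * P p.1 p.2) ∂f.prod f := by
  rw [← integral_const_mul, ← integral_sub h₂ (h₁.const_mul _),
    integral_prod_self_eq_integral_half_add_swap, ← integral_const_mul]
  · refine integral_congr_ae ?_
    filter_upwards [hf.ae_mem_Icc_prod hf] with p hp
    simp only [Prod.fst_swap, Prod.snd_swap, hPsymm p.2 hp.2 p.1 hp.1]
    ring
  · exact h₂.sub (h₁.const_mul _)

theorem variance_dissipation_pure_social_general
    (ε ξ : ℝ)
    (P : ℝ → ℝ → ℝ)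
    (hPmeas : Measurable (Function.uncurry P))
    (hPbdd : BddAbove (Set.image2 P (Icc (-1 : ℝ) 1) (Icc (-1 : ℝ) 1)))
    (hPpos : ∀ w ∈ Icc (-1 : ℝ) 1, ∀ w₁ ∈ Icc (-1 : ℝ) 1, 0 ≤ P w w₁)
    (hPsymm : ∀ w ∈ Icc (-1 : ℝ) 1, ∀ w₁ ∈ Icc (-1 : ℝ) 1, P w w₁ = P w₁ w)
    (fS fI : ℝ → Measure ℝ)
    (hreg : ∀ t ∈ Ici (0 : ℝ), IsFiniteMeasure (fS t) ∧ IsFiniteMeasure (fI t) ∧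
      SuppIcc (fS t) ∧ SuppIcc (fI t) ∧ IsProbabilityMeasure (fS t + fI t))
    (hsol : SolvesPureSocial ε ξ P fS fI) :
    ∀ t ∈ Ici (0 : ℝ),
      HasDerivWithinAt (fun s => var (fS s + fI s))
        (-(ξ / ε) * ∫ w, ∫ w₁, (w - w₁) ^ 2 * P w w₁ * (1 - ξ * P w w₁)
          ∂(fS t + fI t) ∂(fS t + fI t))
        (Ici 0) t := by
  intro t ht
  obtain ⟨-, -, hS, hI, _⟩ := hreg t ht
  have hf : SuppIcc (fS t + fI t) := hS.add hI
  obtain ⟨C, hC⟩ := hPbdd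
  have hP : ∀ w ∈ Icc (-1 : ℝ) 1, ∀ w₁ ∈ Icc (-1 : ℝ) 1, P w w₁ ∈ Icc 0 C :=
    fun w hw w₁ hw₁ => ⟨hPpos w hw w₁ hw₁, hC (mem_image2_of_mem hw hw₁)⟩
  have hfin : ∀ s ∈ Ici (0 : ℝ), IsFiniteMeasure (fS s) ∧ IsFiniteMeasure (fI s) ∧
      SuppIcc (fS s) ∧ SuppIcc (fI s) := fun s hs => by
    obtain ⟨hS, hI, hSsupp, hIsupp, -⟩ := hreg s hs
    exact ⟨hS, hI, hSsupp, hIsupp⟩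
  have h₂ := integrable_comp_kernel hPmeas hP hf hf
    (G := fun w w₁ x => (w + ξ * x * (w₁ - w)) ^ 2 - w ^ 2) (by fun_prop)
  have h₁ := integrable_comp_kernel hPmeas hP hf hf
    (G := fun w w₁ x => w + ξ * x * (w₁ - w) - w) (by fun_prop)
  have hdiss := integrable_comp_kernel hPmeas hP hf hf
    (G := fun w w₁ x => (w - w₁) ^ 2 * x * (1 - ξ * x)) (by fun_prop)
  convert hasDerivWithinAt_var (hsol.hasDerivWithinAt_integral_add hfin (continuous_pow 2) ht h₂)
    (hsol.hasDerivWithinAt_integral_add hfin continuous_id' ht h₁) using 1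
  rw [← integral_prod _ hdiss]
  linear_combination (-1 / ε) *
    integral_sq_jump_sub_two_mul_integral_jump hPsymm hf h₂ h₁ (∫ w, w ∂(fS t + fI t))

/-- **Variance dissipation identity.** For the pure social kinetic dynamics with `P` bounded,
measurable and symmetric on `[-1,1]²`, the variance of `f_t = fS_t + fI_t` satisfies
`ε d/dt Var[f_t] = -ξ ∬ (w - w₁)² P(w,w₁)(1 - ξP(w,w₁)) df_t(w) df_t(w₁)` for all `t ≥ 0`. -/
theorem variance_dissipation_pure_social
    (ε ξ : ℝ) (hε : 0 < ε) (hξ : 0 < ξ)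
    (P : ℝ → ℝ → ℝ)
    (hPmeas : Measurable (Function.uncurry P))
    (hPbdd : BddAbove (Set.image2 P (Icc (-1 : ℝ) 1) (Icc (-1 : ℝ) 1)))
    (hPpos : ∀ w ∈ Icc (-1 : ℝ) 1, ∀ w₁ ∈ Icc (-1 : ℝ) 1, 0 ≤ P w w₁)
    (hPsymm : ∀ w ∈ Icc (-1 : ℝ) 1, ∀ w₁ ∈ Icc (-1 : ℝ) 1, P w w₁ = P w₁ w)
    (fS fI : ℝ → Measure ℝ)
    (hreg : ∀ t ∈ Ici (0 : ℝ), IsFiniteMeasure (fS t) ∧ IsFiniteMeasure (fI t) ∧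
      SuppIcc (fS t) ∧ SuppIcc (fI t) ∧ IsProbabilityMeasure (fS t + fI t))
    (hsol : SolvesPureSocial ε ξ P fS fI) :
    ∀ t ∈ Ici (0 : ℝ),
      HasDerivWithinAt (fun s => var (fS s + fI s))
        (-(ξ / ε) * ∫ w, ∫ w₁, (w - w₁) ^ 2 * P w w₁ * (1 - ξ * P w w₁)
          ∂(fS t + fI t) ∂(fS t + fI t))
        (Ici 0) t :=
  variance_dissipation_pure_social_general ε ξ P hPmeas hPbdd hPpos hPsymm fS fI hreg hsol
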